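/- arXiv:2004.08847 — 5 statements merged into one kernel-verified Lean document; each statement's English description precedes it below -/
import Mathlib

section
/- Let P be a finite set of points in a metric space and s ∈ P. The minimum, over all range assignments r whose induced graph contains a sink tree rooted at s, of the total interference Σ_{p∈P} SI(p), equals the minimum weight of a spanning sink tree (spanning arborescence directed toward s) in the complete directed graph on P with edge weights w(p,q) = |{z ∈ P \ {p} : dist(p,z) ≤ dist(p,q)}|. -/
/-- The minimum total (sender-centric) interference over all range
assignments whose induced graph contains a spanning sink tree rooted at `s` equals the
minimum weight of a spanning sink tree rooted at `s` in the complete directed graph on `P`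
with edge weights `w(p,q) = |{z ∈ P \ {p} : dist p z ≤ dist p q}|`. -/
theorem min_interference_eq_min_sinkTree_weight
    {α : Type*} [MetricSpace α] [DecidableEq α] (P : Finset α) (s : α) (hs : s ∈ P) :
    sInf {I : ℕ | ∃ r : α → ℝ, (∀ p, 0 ≤ r p) ∧
        (∃ par : α → α, par s = s ∧
          (∀ p ∈ P, p ≠ s → par p ∈ P ∧ par p ≠ p ∧ dist p (par p) ≤ r p) ∧
          (∀ p ∈ P, ∃ m : ℕ, par^[m] p = s)) ∧
        I = ∑ p ∈ P, (P.filter (fun q => q ≠ p ∧ dist p q ≤ r p)).card}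
      = sInf {W : ℕ | ∃ par : α → α, par s = s ∧
          (∀ p ∈ P, p ≠ s → par p ∈ P ∧ par p ≠ p) ∧
          (∀ p ∈ P, ∃ m : ℕ, par^[m] p = s) ∧
          W = ∑ p ∈ P.erase s,
                (P.filter (fun z => z ≠ p ∧ dist p z ≤ dist p (par p))).card} := by
  set A := {I : ℕ | ∃ r : α → ℝ, (∀ p, 0 ≤ r p) ∧
        (∃ par : α → α, par s = s ∧
          (∀ p ∈ P, p ≠ s → par p ∈ P ∧ par p ≠ p ∧ dist p (par p) ≤ r p) ∧
          (∀ p ∈ P, ∃ m : ℕ, par^[m] p = s)) ∧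
        I = ∑ p ∈ P, (P.filter (fun q => q ≠ p ∧ dist p q ≤ r p)).card} with hA
  set B := {W : ℕ | ∃ par : α → α, par s = s ∧
          (∀ p ∈ P, p ≠ s → par p ∈ P ∧ par p ≠ p) ∧
          (∀ p ∈ P, ∃ m : ℕ, par^[m] p = s) ∧
          W = ∑ p ∈ P.erase s,
                (P.filter (fun z => z ≠ p ∧ dist p z ≤ dist p (par p))).card} with hB
  -- B is nonempty: parent = constant s
  have hBne : B.Nonempty := by
    refine ⟨_, fun _ => s, rfl, ?_, ?_, rfl⟩
    · intro p _ hp; exact ⟨hs, fun h => hp h.symm⟩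
    · intro p _; exact ⟨1, rfl⟩
  -- from B to A: given par, set r p = 0 if p = s else dist p (par p)
  have hBA : ∀ W ∈ B, W ∈ A := by
    rintro W ⟨par, hpar_s, hpar, hreach, rfl⟩
    refine ⟨fun p => if p = s then 0 else dist p (par p), ?_, ⟨par, hpar_s, ?_, hreach⟩, ?_⟩
    · intro p; dsimp only; split <;> [exact le_refl 0; exact dist_nonneg]
    · intro p hp hps
      obtain ⟨h1, h2⟩ := hpar p hp hps
      exact ⟨h1, h2, by simp [hps]⟩
    · rw [← Finset.add_sum_erase P _ hs]
      have h0 : (P.filter (fun q => q ≠ s ∧ dist s q ≤ if s = s then (0:ℝ)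
          else dist s (par s))).card = 0 := by
        rw [Finset.card_eq_zero, Finset.filter_eq_empty_iff]
        rintro q _ ⟨hq, hd⟩
        simp only [if_pos rfl] at hd
        exact hq (dist_le_zero.mp (by simpa [dist_comm] using hd)).symm
      rw [h0, zero_add]
      refine Finset.sum_congr rfl fun p hp => ?_
      have hps : p ≠ s := Finset.ne_of_mem_erase hp
      simp [hps]
  -- from A to B: same par, weight ≤ interference
  have hAB : ∀ I ∈ A, ∃ W ∈ B, W ≤ I := by
    rintro I ⟨r, hr, ⟨par, hpar_s, hpar, hreach⟩, rfl⟩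
    refine ⟨_, ⟨par, hpar_s, fun p hp hps => ⟨(hpar p hp hps).1, (hpar p hp hps).2.1⟩,
      hreach, rfl⟩, ?_⟩
    calc ∑ p ∈ P.erase s, (P.filter (fun z => z ≠ p ∧ dist p z ≤ dist p (par p))).card
        ≤ ∑ p ∈ P.erase s, (P.filter (fun q => q ≠ p ∧ dist p q ≤ r p)).card := by
          refine Finset.sum_le_sum fun p hp => Finset.card_le_card ?_
          intro z hz
          simp only [Finset.mem_filter] at hz ⊢
          exact ⟨hz.1, hz.2.1, hz.2.2.trans (hpar p (Finset.mem_of_mem_erase hp)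
            (Finset.ne_of_mem_erase hp)).2.2⟩
      _ ≤ ∑ p ∈ P, (P.filter (fun q => q ≠ p ∧ dist p q ≤ r p)).card :=
          Finset.sum_le_sum_of_subset (Finset.erase_subset _ _)
  have hAne : A.Nonempty := hBne.imp fun W hW => hBA W hW
  apply le_antisymm
  · exact Nat.sInf_le (hBA _ (Nat.sInf_mem hBne))
  · obtain ⟨W, hW, hWle⟩ := hAB _ (Nat.sInf_mem hAne)
    exact le_trans (Nat.sInf_le hW) hWle
end

section
/- Let P = {p_1 < p_2 < ... < p_n} be points on a line, and let T be a minimum-weight sink tree rooted at p_x (x ∈ {i,j}) in the complete directed graph on P_{[i,j]} = {p_i, ..., p_j} with weights w(p,q) = |{z ∈ P_{[i,j]} \ {p} : |p−z| ≤ |p−q|}|. Then for any two distinct edges (p_k, p_l) and (p_{k'}, p_{l'}) of T: if k < k' < l then k ≤ l' < l. -/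
/-!
A minimum sink tree cannot be improved by redirecting a single edge `(v, par v)` to a vertex `c`
with `w(v, c) < w(v, par v)`; such a redirection yields a sink tree unless `c` is a descendant
of `v`. Since the weight `w(v, ·)` grows strictly with the distance from `v`, every vertex
strictly closer to `v` than its parent is a descendant of `v`. Applied to `k'`, which lies
strictly between `k` and `par k`, this makes `k'` a proper descendant of `k`; then
`par k' < k` would make `k` a descendant of `k'`, and `par k ≤ par k'` would make `par k` a
descendant of `k`, both closing a cycle.
-/

/-- Edge weight on the line: `w(p_a, p_b)` computed with respect to the point set
`P_{[lo,hi]} = {p_lo, …, p_hi}`. -/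
noncomputable def lineWeight (p : ℕ → ℝ) (lo hi a b : ℕ) : ℕ :=
  ((Finset.Icc lo hi).filter (fun z => z ≠ a ∧ |p a - p z| ≤ |p a - p b|)).card

/-- `par` encodes a spanning sink tree rooted at `p_x` on the vertex set `P_{[i,j]}`:
every non-root vertex has a parent in the vertex set, and iterating the parent map
reaches the root from every vertex. -/
def IsSinkTreeOn (i j x : ℕ) (par : ℕ → ℕ) : Prop :=
  par x = x ∧ (∀ k ∈ Finset.Icc i j, k ≠ x → par k ∈ Finset.Icc i j ∧ par k ≠ k) ∧
    ∀ k ∈ Finset.Icc i j, ∃ m : ℕ, par^[m] k = x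

/-- Total weight of the sink tree encoded by `par` on vertex set `P_{[a,b]}`, with edge
weights computed with respect to the ambient point set `P_{[lo,hi]}`. -/
noncomputable def sinkTreeWeight (p : ℕ → ℝ) (lo hi a b x : ℕ) (par : ℕ → ℕ) : ℕ :=
  ∑ k ∈ (Finset.Icc a b).erase x, lineWeight p lo hi k (par k)

def Reaches (par : ℕ → ℕ) (a b : ℕ) : Prop :=
  ∃ t, par^[t] a = b

namespace Reaches

variable {par : ℕ → ℕ} {a b c : ℕ}

theorem refl (par : ℕ → ℕ) (a : ℕ) : Reaches par a a :=
  ⟨0, rfl⟩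

theorem trans (hab : Reaches par a b) (hbc : Reaches par b c) : Reaches par a c := by
  obtain ⟨s, rfl⟩ := hab
  obtain ⟨t, rfl⟩ := hbc
  exact ⟨t + s, Function.iterate_add_apply par t s a⟩

theorem parent_of_ne (hab : Reaches par a b) (hne : a ≠ b) : Reaches par (par a) b := by
  obtain ⟨_ | t, rfl⟩ := hab
  · exact absurd rfl hne
  · exact ⟨t, (Function.iterate_succ_apply par t a).symm⟩

end Reaches

theorem iterate_update_eq_of_not_reaches {par : ℕ → ℕ} {c v : ℕ} (hcv : ¬Reaches par c v)
    (d : ℕ) (t : ℕ) : (Function.update par v d)^[t] c = par^[t] c := by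
  induction t with
  | zero => rfl
  | succ t ih =>
    rw [Function.iterate_succ_apply', Function.iterate_succ_apply', ih,
      Function.update_of_ne fun h => hcv ⟨t, h⟩]

theorem StrictMono.abs_sub_lt_abs_sub_of_lt_of_lt {p : ℕ → ℝ} (hp : StrictMono p) {a b c : ℕ}
    (hab : a < b) (hbc : b < c) : |p a - p b| < |p a - p c| := by
  have := hp hab
  have := hp hbc
  rw [abs_of_neg (by linarith), abs_of_neg (by linarith)]
  linarith

theorem StrictMono.abs_sub_lt_abs_sub_of_gt_of_gt {p : ℕ → ℝ} (hp : StrictMono p) {a b c : ℕ}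
    (hcb : c < b) (hba : b < a) : |p a - p b| < |p a - p c| := by
  have := hp hcb
  have := hp hba
  rw [abs_of_pos (by linarith), abs_of_pos (by linarith)]
  linarith

theorem lineWeight_lt_of_abs_sub_lt {p : ℕ → ℝ} {lo hi a b c : ℕ} (hb : b ∈ Finset.Icc lo hi)
    (hba : b ≠ a) (h : |p a - p c| < |p a - p b|) :
    lineWeight p lo hi a c < lineWeight p lo hi a b := by
  refine Finset.card_lt_card (Finset.ssubset_iff_of_subset ?_ |>.2 ⟨b, ?_, ?_⟩)
  · exact Finset.monotone_filter_right _ fun _ _ hz => ⟨hz.1, hz.2.trans h.le⟩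
  · simp [hb, hba]
  · simp [h]

theorem sinkTreeWeight_update_lt {p : ℕ → ℝ} {lo hi a b x v c : ℕ} {par : ℕ → ℕ}
    (hv : v ∈ Finset.Icc a b) (hvx : v ≠ x)
    (hlt : lineWeight p lo hi v c < lineWeight p lo hi v (par v)) :
    sinkTreeWeight p lo hi a b x (Function.update par v c) < sinkTreeWeight p lo hi a b x par := by
  apply Finset.sum_lt_sum
  · intro u _
    rcases eq_or_ne u v with rfl | huv
    · rw [Function.update_self]
      exact hlt.le
    · rw [Function.update_of_ne huv]
  · exact ⟨v, Finset.mem_erase.2 ⟨hvx, hv⟩, by rwa [Function.update_self]⟩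

namespace IsSinkTreeOn

variable {i j x : ℕ} {par : ℕ → ℕ}

theorem parent_mem (hT : IsSinkTreeOn i j x par) {v : ℕ} (hv : v ∈ Finset.Icc i j)
    (hvx : v ≠ x) : par v ∈ Finset.Icc i j :=
  (hT.2.1 v hv hvx).1

theorem parent_ne (hT : IsSinkTreeOn i j x par) {v : ℕ} (hv : v ∈ Finset.Icc i j)
    (hvx : v ≠ x) : par v ≠ v :=
  (hT.2.1 v hv hvx).2

/-- A `par`-cycle through `v` would be a periodic orbit, yet it also hits the fixed root `x`. -/
theorem not_reaches_parent (hT : IsSinkTreeOn i j x par) {v : ℕ} (hv : v ∈ Finset.Icc i j)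
    (hvx : v ≠ x) : ¬Reaches par (par v) v := by
  rintro ⟨t, ht⟩
  have hper : Function.IsPeriodicPt par (t + 1) v := by
    rwa [Function.IsPeriodicPt, Function.IsFixedPt, Function.iterate_succ_apply]
  obtain ⟨n, hn⟩ := hT.2.2 v hv
  have hle : n ≤ (t + 1) * n := Nat.le_mul_of_pos_left n t.succ_pos
  apply hvx
  calc v = par^[(t + 1) * n] v := (hper.mul_const n).eq.symm
    _ = par^[(t + 1) * n - n] (par^[n] v) := by
        rw [← Function.iterate_add_apply, Nat.sub_add_cancel hle]
    _ = x := by rw [hn, Function.iterate_fixed hT.1]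

theorem update (hT : IsSinkTreeOn i j x par) {v c : ℕ} (hvx : v ≠ x)
    (hc : c ∈ Finset.Icc i j) (hcv : c ≠ v) (hcv' : ¬Reaches par c v) :
    IsSinkTreeOn i j x (Function.update par v c) := by
  obtain ⟨hroot, hmem, hreach⟩ := hT
  have hc_reach : ∃ m, (Function.update par v c)^[m] c = x := by
    obtain ⟨m, hm⟩ := hreach c hc
    exact ⟨m, by rw [iterate_update_eq_of_not_reaches hcv', hm]⟩
  have hlift : ∀ n u, par^[n] u = x → ∃ m, (Function.update par v c)^[m] u = x := by
    intro n
    induction n with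
    | zero => exact fun u hu => ⟨0, hu⟩
    | succ n ih =>
      intro u hu
      rcases eq_or_ne u v with rfl | huv
      · obtain ⟨m, hm⟩ := hc_reach
        exact ⟨m + 1, by rwa [Function.iterate_succ_apply, Function.update_self]⟩
      · obtain ⟨m, hm⟩ := ih (par u) (by rwa [← Function.iterate_succ_apply])
        exact ⟨m + 1, by rwa [Function.iterate_succ_apply, Function.update_of_ne huv]⟩
  refine ⟨by rwa [Function.update_of_ne hvx.symm], fun u hu hux => ?_, fun u hu => ?_⟩
  · rcases eq_or_ne u v with rfl | huv
    · rw [Function.update_self]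
      exact ⟨hc, hcv⟩
    · rw [Function.update_of_ne huv]
      exact hmem u hu hux
  · obtain ⟨n, hn⟩ := hreach u hu
    exact hlift n u hn

theorem reaches_of_abs_sub_lt {p : ℕ → ℝ} (hT : IsSinkTreeOn i j x par)
    (hmin : ∀ par' : ℕ → ℕ, IsSinkTreeOn i j x par' →
      sinkTreeWeight p i j i j x par ≤ sinkTreeWeight p i j i j x par')
    {v c : ℕ} (hv : v ∈ Finset.Icc i j) (hvx : v ≠ x) (hc : c ∈ Finset.Icc i j)
    (hcloser : |p v - p c| < |p v - p (par v)|) : Reaches par c v := by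
  by_contra hcv
  have hne : c ≠ v := fun h => hcv (h ▸ Reaches.refl par c)
  refine (hmin _ (hT.update hvx hc hne hcv)).not_gt (sinkTreeWeight_update_lt hv hvx ?_)
  exact lineWeight_lt_of_abs_sub_lt (hT.parent_mem hv hvx) (hT.parent_ne hv hvx) hcloser

end IsSinkTreeOn

theorem minWeight_sinkTree_noncrossing_i_general
    (p : ℕ → ℝ) (hp : StrictMono p) (i j x : ℕ)
    (par : ℕ → ℕ) (hT : IsSinkTreeOn i j x par)
    (hmin : ∀ par' : ℕ → ℕ, IsSinkTreeOn i j x par' →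
      sinkTreeWeight p i j i j x par ≤ sinkTreeWeight p i j i j x par')
    (k k' : ℕ) (hk : k ∈ Finset.Icc i j) (hk' : k' ∈ Finset.Icc i j)
    (hkx : k ≠ x) (hk'x : k' ≠ x)
    (h1 : k < k') (h2 : k' < par k) :
    k ≤ par k' ∧ par k' < par k := by
  have hk'k : Reaches par k' k :=
    hT.reaches_of_abs_sub_lt hmin hk hkx hk' (hp.abs_sub_lt_abs_sub_of_lt_of_lt h1 h2)
  have hpar'k : Reaches par (par k') k := hk'k.parent_of_ne h1.ne'
  constructor
  · by_contra! hlt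
    have hkk' : Reaches par k k' :=
      hT.reaches_of_abs_sub_lt hmin hk' hk'x hk (hp.abs_sub_lt_abs_sub_of_gt_of_gt hlt h1)
    exact hT.not_reaches_parent hk' hk'x (hpar'k.trans hkk')
  · by_contra! hge
    rcases hge.eq_or_lt with heq | hlt
    · exact hT.not_reaches_parent hk hkx (heq ▸ hpar'k)
    · have hpark' : Reaches par (par k) k' := hT.reaches_of_abs_sub_lt hmin hk' hk'x
        (hT.parent_mem hk hkx) (hp.abs_sub_lt_abs_sub_of_lt_of_lt h2 hlt)
      exact hT.not_reaches_parent hk hkx (hpark'.trans hk'k)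

/-- non-crossing property (i) of a minimum-weight sink tree on points on a
line: for distinct edges `(p_k, p_l)` and `(p_{k'}, p_{l'})` of the tree (so `l = par k`,
`l' = par k'`), if `k < k' < l` then `k ≤ l' < l`. -/
theorem minWeight_sinkTree_noncrossing_i
    (p : ℕ → ℝ) (hp : StrictMono p) (i j x : ℕ) (hij : i ≤ j) (hx : x = i ∨ x = j)
    (par : ℕ → ℕ) (hT : IsSinkTreeOn i j x par)
    (hmin : ∀ par' : ℕ → ℕ, IsSinkTreeOn i j x par' →
      sinkTreeWeight p i j i j x par ≤ sinkTreeWeight p i j i j x par')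
    (k k' : ℕ) (hk : k ∈ Finset.Icc i j) (hk' : k' ∈ Finset.Icc i j)
    (hkx : k ≠ x) (hk'x : k' ≠ x) (hne : k ≠ k')
    (h1 : k < k') (h2 : k' < par k) :
    k ≤ par k' ∧ par k' < par k :=
  minWeight_sinkTree_noncrossing_i_general p hp i j x par hT hmin k k' hk hk' hkx hk'x h1 h2
end

section
/- Let P be a finite set of points in the plane with s ∈ P. Let r₁ be a range assignment whose induced graph contains a broadcast tree rooted at s of minimum total interference among all such assignments, and r₂ a range assignment whose induced graph contains a sink tree rooted at s of minimum total interference among all such assignments. Define r(p) = max{r₁(p), r₂(p)}. Then the induced graph G_r is strongly connected and I(G_r) ≤ 2·OPT, where OPT is the minimum total interference over all range assignments with strongly connected induced graph. -/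
open scoped Classical

noncomputable section

abbrev Plane := EuclideanSpace ℝ (Fin 2)

/-- Total (sender-centric) interference of the graph induced by range assignment `r`. -/
def totalInterference (P : Finset Plane) (r : Plane → ℝ) : ℕ :=
  ∑ p ∈ P, (P.filter (fun q => q ≠ p ∧ dist p q ≤ r p)).card

/-- Edge relation of the graph induced by `r` on `P`: `(p,q)` iff `dist p q ≤ r p`. -/
def EdgeRel (P : Finset Plane) (r : Plane → ℝ) (p q : Plane) : Prop :=
  p ∈ P ∧ q ∈ P ∧ dist p q ≤ r p

/-- The induced graph is strongly connected on `P`. -/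
def StronglyConnected (P : Finset Plane) (r : Plane → ℝ) : Prop :=
  ∀ p ∈ P, ∀ q ∈ P, Relation.ReflTransGen (EdgeRel P r) p q

/-- The induced graph contains a spanning broadcast tree rooted at `s`. -/
def ContainsBroadcastTree (P : Finset Plane) (s : Plane) (r : Plane → ℝ) : Prop :=
  ∃ par : Plane → Plane, par s = s ∧
    (∀ p ∈ P, p ≠ s → par p ∈ P ∧ par p ≠ p ∧ dist (par p) p ≤ r (par p)) ∧
    ∀ p ∈ P, ∃ m : ℕ, par^[m] p = s

/-- The induced graph contains a spanning sink tree rooted at `s`. -/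
def ContainsSinkTree (P : Finset Plane) (s : Plane) (r : Plane → ℝ) : Prop :=
  ∃ par : Plane → Plane, par s = s ∧
    (∀ p ∈ P, p ≠ s → par p ∈ P ∧ par p ≠ p ∧ dist p (par p) ≤ r p) ∧
    ∀ p ∈ P, ∃ m : ℕ, par^[m] p = s

/-! ### Auxiliary machinery -/

/-- `Steps R s k p` : there is an `R`-chain of length `k` from `p` to `s`. -/
def Steps (R : Plane → Plane → Prop) (s : Plane) : ℕ → Plane → Prop
  | 0, p => p = s
  | (k+1), p => ∃ q, R p q ∧ Steps R s k q

lemma steps_of_reflTransGen {R : Plane → Plane → Prop} {s p : Plane}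
    (h : Relation.ReflTransGen R p s) : ∃ k, Steps R s k p := by
  induction h using Relation.ReflTransGen.head_induction_on with
  | refl => exact ⟨0, rfl⟩
  | head hab _ ih => obtain ⟨k, hk⟩ := ih; exact ⟨k + 1, _, hab, hk⟩

/-- From reachability of `s` along `R` from every point of `P`, extract a spanning
"parent" function whose iterates reach `s`. -/
lemma exists_tree {R : Plane → Plane → Prop} (P : Finset Plane) (s : Plane)
    (hmem : ∀ p q, R p q → q ∈ P)
    (hreach : ∀ p ∈ P, Relation.ReflTransGen R p s) :
    ∃ par : Plane → Plane, par s = s ∧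
      (∀ p ∈ P, p ≠ s → par p ∈ P ∧ par p ≠ p ∧ R p (par p)) ∧
      ∀ p ∈ P, ∃ m : ℕ, par^[m] p = s := by
  classical
  set n : Plane → ℕ := fun p => if h : ∃ k, Steps R s k p then Nat.find h else 0 with hn
  have key : ∀ p, p ≠ s → (h : ∃ k, Steps R s k p) →
      ∃ q, R p q ∧ (∃ k, Steps R s k q) ∧ n q < n p := by
    intro p hp h
    have hfind : Steps R s (Nat.find h) p := Nat.find_spec h
    have hpos : Nat.find h ≠ 0 := by
      intro h0
      rw [h0] at hfind
      exact hp hfind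
    obtain ⟨m, hm⟩ := Nat.exists_eq_succ_of_ne_zero hpos
    rw [hm] at hfind
    obtain ⟨q, hq, hsq⟩ := hfind
    have hq' : ∃ k, Steps R s k q := ⟨m, hsq⟩
    refine ⟨q, hq, hq', ?_⟩
    have h1 : n q ≤ m := by
      simp only [hn, dif_pos hq']
      exact Nat.find_le hsq
    have h2 : n p = m + 1 := by simp only [hn, dif_pos h, hm]
    omega
  set par : Plane → Plane := fun p =>
    if hc : p ≠ s ∧ ∃ k, Steps R s k p then Classical.choose (key p hc.1 hc.2) else s
    with hpar
  have hpar_spec : ∀ p, p ≠ s → (h : ∃ k, Steps R s k p) →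
      R p (par p) ∧ (∃ k, Steps R s k (par p)) ∧ n (par p) < n p := by
    intro p hps h
    have hc : p ≠ s ∧ ∃ k, Steps R s k p := ⟨hps, h⟩
    have : par p = Classical.choose (key p hc.1 hc.2) := by
      simp only [hpar, dif_pos hc]
    rw [this]
    exact Classical.choose_spec (key p hc.1 hc.2)
  have hpars : par s = s := by simp [hpar]
  have iter : ∀ N, ∀ p ∈ P, n p ≤ N → ∃ m : ℕ, par^[m] p = s := by
    intro N
    induction N with
    | zero =>
      intro p hp hnp
      by_cases hps : p = s
      · exact ⟨0, hps⟩
      · obtain ⟨_, _, hlt⟩ := hpar_spec p hps (steps_of_reflTransGen (hreach p hp))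
        omega
    | succ N ih =>
      intro p hp hnp
      by_cases hps : p = s
      · exact ⟨0, hps⟩
      · obtain ⟨hR, hex, hlt⟩ := hpar_spec p hps (steps_of_reflTransGen (hreach p hp))
        obtain ⟨m, hm⟩ := ih (par p) (hmem p (par p) hR) (by omega)
        exact ⟨m + 1, by rw [Function.iterate_succ_apply, hm]⟩
  refine ⟨par, hpars, ?_, fun p hp => iter (n p) p hp le_rfl⟩
  intro p hp hps
  obtain ⟨hR, hex, hlt⟩ := hpar_spec p hps (steps_of_reflTransGen (hreach p hp))
  refine ⟨hmem p (par p) hR, ?_, hR⟩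
  intro heq
  rw [heq] at hlt
  exact lt_irrefl _ hlt

lemma sink_reach {P : Finset Plane} {s : Plane} {r r' : Plane → ℝ}
    (hle : ∀ p, r p ≤ r' p) (h : ContainsSinkTree P s r) :
    ∀ p ∈ P, Relation.ReflTransGen (EdgeRel P r') p s := by
  obtain ⟨par, hps, hstep, hiter⟩ := h
  intro p hp
  obtain ⟨m, hm⟩ := hiter p hp
  clear hiter
  induction m generalizing p with
  | zero => rw [Function.iterate_zero_apply] at hm; exact hm ▸ Relation.ReflTransGen.refl
  | succ m ih =>
    by_cases hps' : p = s
    · exact hps' ▸ Relation.ReflTransGen.refl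
    · obtain ⟨hmem, hne, hd⟩ := hstep p hp hps'
      have hm' : par^[m] (par p) = s := by rw [← Function.iterate_succ_apply]; exact hm
      exact Relation.ReflTransGen.head ⟨hp, hmem, hd.trans (hle p)⟩ (ih (par p) hmem hm')

lemma broadcast_reach {P : Finset Plane} {s : Plane} {r r' : Plane → ℝ}
    (hle : ∀ p, r p ≤ r' p) (h : ContainsBroadcastTree P s r) :
    ∀ p ∈ P, Relation.ReflTransGen (EdgeRel P r') s p := by
  obtain ⟨par, hps, hstep, hiter⟩ := h
  intro p hp
  obtain ⟨m, hm⟩ := hiter p hp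
  clear hiter
  induction m generalizing p with
  | zero => rw [Function.iterate_zero_apply] at hm; exact hm ▸ Relation.ReflTransGen.refl
  | succ m ih =>
    by_cases hps' : p = s
    · exact hps' ▸ Relation.ReflTransGen.refl
    · obtain ⟨hmem, hne, hd⟩ := hstep p hp hps'
      have hm' : par^[m] (par p) = s := by rw [← Function.iterate_succ_apply]; exact hm
      exact Relation.ReflTransGen.tail (ih (par p) hmem hm') ⟨hmem, hp, hd.trans (hle (par p))⟩

lemma interference_max_le (P : Finset Plane) (r₁ r₂ : Plane → ℝ) :
    totalInterference P (fun p => max (r₁ p) (r₂ p)) ≤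
      totalInterference P r₁ + totalInterference P r₂ := by
  unfold totalInterference
  rw [← Finset.sum_add_distrib]
  apply Finset.sum_le_sum
  intro p _
  refine le_trans (Finset.card_le_card ?_) (Finset.card_union_le _ _)
  intro q hq
  simp only [Finset.mem_filter, Finset.mem_union] at hq ⊢
  obtain ⟨hqP, hqp, hd⟩ := hq
  rcases le_max_iff.mp hd with h | h
  · exact Or.inl ⟨hqP, hqp, h⟩
  · exact Or.inr ⟨hqP, hqp, h⟩

lemma sc_broadcast {P : Finset Plane} {s : Plane} {r : Plane → ℝ}
    (hsc : StronglyConnected P r) (hs : s ∈ P) : ContainsBroadcastTree P s r := by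
  obtain ⟨par, h1, h2, h3⟩ :=
    exists_tree (R := fun p q => EdgeRel P r q p) P s
      (fun p q h => h.1) (fun p hp => Relation.reflTransGen_swap.mpr (hsc s hs p hp))
  exact ⟨par, h1, fun p hp hps => by
    obtain ⟨ha, hb, hc⟩ := h2 p hp hps
    exact ⟨ha, hb, hc.2.2⟩, h3⟩

lemma sc_sink {P : Finset Plane} {s : Plane} {r : Plane → ℝ}
    (hsc : StronglyConnected P r) (hs : s ∈ P) : ContainsSinkTree P s r := by
  obtain ⟨par, h1, h2, h3⟩ :=
    exists_tree (R := EdgeRel P r) P s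
      (fun p q h => h.2.1) (fun p hp => hsc p hp s hs)
  exact ⟨par, h1, fun p hp hps => by
    obtain ⟨ha, hb, hc⟩ := h2 p hp hps
    exact ⟨ha, hb, hc.2.2⟩, h3⟩

/-- combining an interference-optimal broadcast assignment `r₁` and an
interference-optimal sink assignment `r₂` by `r p = max (r₁ p) (r₂ p)` yields a strongly
connected induced graph whose total interference is at most twice the optimum over all
valid (strongly connected) assignments. -/
theorem two_approximation (P : Finset Plane) (s : Plane) (hs : s ∈ P)
    (r₁ r₂ : Plane → ℝ) (hr₁ : ∀ p, 0 ≤ r₁ p) (hr₂ : ∀ p, 0 ≤ r₂ p)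
    (hb : ContainsBroadcastTree P s r₁)
    (hbmin : ∀ r : Plane → ℝ, (∀ p, 0 ≤ r p) → ContainsBroadcastTree P s r →
      totalInterference P r₁ ≤ totalInterference P r)
    (hk : ContainsSinkTree P s r₂)
    (hkmin : ∀ r : Plane → ℝ, (∀ p, 0 ≤ r p) → ContainsSinkTree P s r →
      totalInterference P r₂ ≤ totalInterference P r) :
    StronglyConnected P (fun p => max (r₁ p) (r₂ p)) ∧
    ∀ rstar : Plane → ℝ, (∀ p, 0 ≤ rstar p) → StronglyConnected P rstar →
      totalInterference P (fun p => max (r₁ p) (r₂ p)) ≤ 2 * totalInterference P rstar := by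
  constructor
  · intro p hp q hq
    exact Relation.ReflTransGen.trans
      (sink_reach (fun p => le_max_right (r₁ p) (r₂ p)) hk p hp)
      (broadcast_reach (fun p => le_max_left (r₁ p) (r₂ p)) hb q hq)
  · intro rstar hrs hsc
    have h1 := hbmin rstar hrs (sc_broadcast hsc hs)
    have h2 := hkmin rstar hrs (sc_sink hsc hs)
    calc totalInterference P (fun p => max (r₁ p) (r₂ p))
        ≤ totalInterference P r₁ + totalInterference P r₂ := interference_max_le P r₁ r₂
      _ ≤ totalInterference P rstar + totalInterference P rstar := Nat.add_le_add h1 h2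
      _ = 2 * totalInterference P rstar := (two_mul _).symm

end
end

section
/- In the NP-hardness gadget: let P_i = {c, c+(1,0), c−(1,0), c+(0,1), c−(0,1)} ⊆ ℝ² be a center c with its four unit-distance connectors, embedded in a point set P where every point of P \ P_i is at distance at least 2.4 from c and at least 1.4 from each connector. If r is a range assignment on P whose induced graph is strongly connected, then Σ_{p ∈ P_i} SI(p) ≥ 9. -/
/-!
Every point of the gadget is at distance at least `1` from every other point of `P` (the gadget
lies on a translate of `ℤ²`, and the rest of `P` is farther away), so each gadget point, which
must reach a point outside the gadget, has range at least `1`. Hence the center covers its four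
connectors and every connector covers the center: `4 + 4 · 1 = 8`. A path from the center to an
outside point leaves the gadget along some edge `a → b`, and `b` is one more point covered by `a`.
-/

open scoped Classical

noncomputable section

/-- The four unit-distance connectors of a gadget with center `c`. -/
def connectors (c : Plane) : Finset Plane :=
  {c + EuclideanSpace.single 0 1, c - EuclideanSpace.single 0 1,
   c + EuclideanSpace.single 1 1, c - EuclideanSpace.single 1 1}

/-- The gadget `P_i`: the center together with its four connectors. -/
def gadget (c : Plane) : Finset Plane := insert c (connectors c)

/-- Sender-centric interference of `p` under assignment `r` within the point set `P`. -/
def SI (P : Finset Plane) (r : Plane → ℝ) (p : Plane) : ℕ :=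
  (P.filter (fun q => q ≠ p ∧ dist p q ≤ r p)).card

namespace Relation.ReflTransGen

variable {α : Type*} {R : α → α → Prop} {a b : α}

theorem exists_exit {S : α → Prop} (h : ReflTransGen R a b) (ha : S a) (hb : ¬ S b) :
    ∃ x y, S x ∧ ¬ S y ∧ R x y := by
  induction h with
  | refl => exact absurd ha hb
  | @tail y z _ hyz ih =>
    by_cases hy : S y
    · exact ⟨y, z, hy, hb, hyz⟩
    · exact ih hy

theorem exists_ne_step (h : ReflTransGen R a b) (hab : a ≠ b) : ∃ y, y ≠ a ∧ R a y := by
  obtain ⟨x, y, rfl, hy, hxy⟩ := h.exists_exit (S := (· = a)) rfl hab.symm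
  exact ⟨y, hy, hxy⟩

end Relation.ReflTransGen

theorem le_range_of_reflTransGen {X : Type*} [PseudoMetricSpace X] {P : Finset X}
    {r : X → ℝ} {p q : X} {δ : ℝ} (hsep : ∀ b ∈ P, b ≠ p → δ ≤ dist p b)
    (hpq : Relation.ReflTransGen (fun a b => a ∈ P ∧ b ∈ P ∧ dist a b ≤ r a) p q)
    (hne : p ≠ q) : δ ≤ r p := by
  obtain ⟨b, hbp, -, hbP, hpb⟩ := hpq.exists_ne_step hne
  exact (hsep b hbP hbp).trans hpb

theorem EuclideanSpace.one_le_dist_of_forall_sub_eq_intCast {ι : Type*} [Fintype ι]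
    {p q : EuclideanSpace ℝ ι} (hint : ∀ i, ∃ n : ℤ, p i - q i = n) (hne : p ≠ q) :
    1 ≤ dist p q := by
  obtain ⟨i, hi⟩ : ∃ i, p i ≠ q i := by
    by_contra! h
    exact hne (PiLp.ext h)
  obtain ⟨n, hn⟩ := hint i
  have hn0 : n ≠ 0 := by
    rintro rfl
    exact hi (sub_eq_zero.1 (by simpa using hn))
  calc (1 : ℝ) ≤ |(n : ℝ)| := by exact_mod_cast Int.one_le_abs hn0
    _ = dist (p i) (q i) := by rw [Real.dist_eq, hn]
    _ ≤ dist p q := PiLp.dist_apply_le p q i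

section Gadget

variable {c p q x : Plane}

theorem mem_gadget : p ∈ gadget c ↔ p = c ∨ p ∈ connectors c := Finset.mem_insert

theorem center_mem_gadget (c : Plane) : c ∈ gadget c := Finset.mem_insert_self c _

theorem mem_gadget_of_mem_connectors (hx : x ∈ connectors c) : x ∈ gadget c :=
  Finset.mem_insert_of_mem hx

theorem dist_center_of_mem_connectors (hx : x ∈ connectors c) : dist x c = 1 := by
  simp only [connectors, Finset.mem_insert, Finset.mem_singleton] at hx
  rcases hx with rfl | rfl | rfl | rfl <;> simp

theorem ne_center_of_mem_connectors (hx : x ∈ connectors c) : x ≠ c := fun h => by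
  simpa [h] using dist_center_of_mem_connectors hx

theorem center_notMem_connectors (c : Plane) : c ∉ connectors c := fun hc =>
  ne_center_of_mem_connectors hc rfl

theorem card_connectors (c : Plane) : (connectors c).card = 4 := by
  rw [connectors, Finset.card_eq_four]
  refine ⟨_, _, _, _, ?_, ?_, ?_, ?_, ?_, ?_, rfl⟩ <;>
    simp only [ne_eq, PiLp.ext_iff, Fin.forall_fin_two] <;> simp <;> intro h <;> linarith

theorem exists_sub_center_eq_intCast (hp : p ∈ gadget c) (i : Fin 2) :
    ∃ n : ℤ, p i - c i = n := by
  simp only [gadget, connectors, Finset.mem_insert, Finset.mem_singleton] at hp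
  rcases hp with rfl | rfl | rfl | rfl | rfl <;> fin_cases i <;> simp <;>
    first | exact ⟨0, Int.cast_zero.symm⟩ | exact ⟨1, Int.cast_one.symm⟩ | exact ⟨-1, by simp⟩

theorem one_le_dist_of_mem_gadget (hp : p ∈ gadget c) (hq : q ∈ gadget c) (hne : p ≠ q) :
    1 ≤ dist p q := by
  refine EuclideanSpace.one_le_dist_of_forall_sub_eq_intCast (fun i => ?_) hne
  obtain ⟨m, hm⟩ := exists_sub_center_eq_intCast hp i
  obtain ⟨n, hn⟩ := exists_sub_center_eq_intCast hq i
  exact ⟨m - n, by push_cast; linarith⟩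

end Gadget

section Interference

variable {P : Finset Plane} {r : Plane → ℝ} {c p b : Plane}

theorem card_le_SI {S : Finset Plane} (hSP : S ⊆ P) (hpS : p ∉ S)
    (hS : ∀ q ∈ S, dist p q ≤ r p) : S.card ≤ SI P r p :=
  Finset.card_le_card fun q hq =>
    Finset.mem_filter.2 ⟨hSP hq, ne_of_mem_of_not_mem hq hpS, hS q hq⟩

theorem one_le_dist_of_mem_gadget_of_mem
    (hfar : ∀ q ∈ P, q ∉ gadget c → (2.4 ≤ dist q c ∧ ∀ x ∈ connectors c, 1.4 ≤ dist q x))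
    (hp : p ∈ gadget c) (hb : b ∈ P) (hne : b ≠ p) : 1 ≤ dist p b := by
  by_cases hbg : b ∈ gadget c
  · exact one_le_dist_of_mem_gadget hp hbg hne.symm
  obtain ⟨hbc, hbx⟩ := hfar b hb hbg
  rw [dist_comm]
  rcases mem_gadget.1 hp with rfl | hx
  · linarith
  · linarith [hbx p hx]

def gadgetBound (c p : Plane) : ℕ := if p = c then 4 else 1

theorem sum_gadgetBound (c : Plane) : ∑ p ∈ gadget c, gadgetBound c p = 8 := by
  have hx : ∀ x ∈ connectors c, gadgetBound c x = 1 := fun x hx =>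
    if_neg (ne_center_of_mem_connectors hx)
  rw [gadget, Finset.sum_insert (center_notMem_connectors c), Finset.sum_congr rfl hx]
  simp [gadgetBound, card_connectors]

theorem connectors_subset (hsub : gadget c ⊆ P) : connectors c ⊆ P :=
  (Finset.subset_insert c _).trans hsub

theorem gadgetBound_le_SI (hsub : gadget c ⊆ P) (hp : p ∈ gadget c) (hr : 1 ≤ r p) :
    gadgetBound c p ≤ SI P r p := by
  rcases mem_gadget.1 hp with rfl | hx
  · rw [gadgetBound, if_pos rfl, ← card_connectors p]
    exact card_le_SI (connectors_subset hsub) (center_notMem_connectors p) fun x hx => by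
      rwa [dist_comm, dist_center_of_mem_connectors hx]
  · rw [gadgetBound, if_neg (ne_center_of_mem_connectors hx), ← Finset.card_singleton c]
    refine card_le_SI ?_ ?_ ?_ <;> simp [hsub (center_mem_gadget c),
      ne_center_of_mem_connectors hx, dist_center_of_mem_connectors hx, hr]

theorem gadgetBound_lt_SI (hsub : gadget c ⊆ P) (hp : p ∈ gadget c) (hr : 1 ≤ r p)
    (hb : b ∈ P) (hbg : b ∉ gadget c) (hpb : dist p b ≤ r p) : gadgetBound c p < SI P r p := by
  have hpb' : p ≠ b := ne_of_mem_of_not_mem hp hbg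
  rcases mem_gadget.1 hp with rfl | hx
  · have hbx : b ∉ connectors p := fun h => hbg (mem_gadget_of_mem_connectors h)
    calc gadgetBound p p < (insert b (connectors p)).card := by
          simp [gadgetBound, Finset.card_insert_of_notMem hbx, card_connectors]
      _ ≤ SI P r p := by
          refine card_le_SI (Finset.insert_subset hb (connectors_subset hsub)) ?_ ?_
          · simp [hpb', center_notMem_connectors]
          · exact (Finset.forall_mem_insert _ _ _).2 ⟨hpb, fun x hx =>
              (dist_comm p x).trans_le ((dist_center_of_mem_connectors hx).trans_le hr)⟩
  · have hpc := ne_center_of_mem_connectors hx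
    have hcb : c ≠ b := ne_of_mem_of_not_mem (center_mem_gadget c) hbg
    calc gadgetBound c p < ({c, b} : Finset Plane).card := by
          simp [gadgetBound, hpc, hcb]
      _ ≤ SI P r p := by
          refine card_le_SI ?_ ?_ ?_ <;> simp [Finset.insert_subset_iff, hsub (center_mem_gadget c),
            hb, hpc, hpb', dist_center_of_mem_connectors hx, hr, hpb]

end Interference

theorem gadget_interference_ge_nine_general (P : Finset Plane) (c : Plane)
    (hsub : gadget c ⊆ P)
    (hfar : ∀ q ∈ P, q ∉ gadget c →
      (2.4 ≤ dist q c ∧ ∀ x ∈ connectors c, 1.4 ≤ dist q x))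
    (hdeg : ∃ q₁ ∈ P, ∃ q₂ ∈ P, q₁ ∉ gadget c ∧ q₂ ∉ gadget c ∧ q₁ ≠ q₂ ∧
      dist q₁ c = 2.4 ∧ dist q₂ c = 2.4)
    (r : Plane → ℝ)
    (hconn : ∀ p ∈ P, ∀ q ∈ P,
      Relation.ReflTransGen (fun a b => a ∈ P ∧ b ∈ P ∧ dist a b ≤ r a) p q) :
    9 ≤ ∑ p ∈ gadget c, SI P r p := by
  obtain ⟨q, hqP, -, -, hq, -⟩ := hdeg
  have hr : ∀ p ∈ gadget c, 1 ≤ r p := fun p hp =>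
    le_range_of_reflTransGen (fun _ hb hne => one_le_dist_of_mem_gadget_of_mem hfar hp hb hne)
      (hconn p (hsub hp) q hqP) (ne_of_mem_of_not_mem hp hq)
  obtain ⟨a, b, ha, hb, -, hbP, hab⟩ :=
    (hconn c (hsub (center_mem_gadget c)) q hqP).exists_exit (center_mem_gadget c) hq
  calc 9 = ∑ p ∈ gadget c, gadgetBound c p + 1 := by rw [sum_gadgetBound]
    _ ≤ ∑ p ∈ gadget c, SI P r p :=
      Finset.sum_lt_sum (fun p hp => gadgetBound_le_SI hsub hp (hr p hp))
        ⟨a, ha, gadgetBound_lt_SI hsub ha (hr a ha) hbP hb hab⟩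

/-- in the NP-hardness gadget, every valid (strongly connected) range
assignment incurs total sender interference at least `9` on the gadget `P_i`. -/
theorem gadget_interference_ge_nine (P : Finset Plane) (c : Plane)
    (hsub : gadget c ⊆ P)
    (hfar : ∀ q ∈ P, q ∉ gadget c →
      (2.4 ≤ dist q c ∧ ∀ x ∈ connectors c, 1.4 ≤ dist q x))
    (hdeg : ∃ q₁ ∈ P, ∃ q₂ ∈ P, q₁ ∉ gadget c ∧ q₂ ∉ gadget c ∧ q₁ ≠ q₂ ∧
      dist q₁ c = 2.4 ∧ dist q₂ c = 2.4)
    (r : Plane → ℝ) (hr : ∀ p, 0 ≤ r p)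
    (hconn : ∀ p ∈ P, ∀ q ∈ P,
      Relation.ReflTransGen (fun a b => a ∈ P ∧ b ∈ P ∧ dist a b ≤ r a) p q) :
    9 ≤ ∑ p ∈ gadget c, SI P r p :=
  gadget_interference_ge_nine_general P c hsub hfar hdeg r hconn

end
end

section
/- For points on a line, the minimum of cost(ρ^l, ρ^r) = Σ_{p∈P} max{I_{ρ^l}(p), I_{ρ^r}(p)} over all valid left-right assignments equals the minimum of I(G_ρ) over all valid range assignments ρ, where I_{ρ^l}(p) = |{q ≠ p : |pq| ≤ ρ^l(p)}| and I_{ρ^r}(p) = |{q ≠ p : |pq| ≤ ρ^r(p)}|. -/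
/-!
The two sets of achievable costs coincide. Given `(ρˡ, ρʳ)`, the range assignment
`ρ = max ρˡ ρʳ` has at least the same edges, and since the number of points within distance `r`
of `p` is monotone in `r`, `I_ρ(p) = max (I_{ρˡ}(p), I_{ρʳ}(p))`. Conversely `ρ ↦ (ρ, ρ)`
keeps every edge between distinct points (on a line each lies to the left or to the right)
and has cost `Σ max (I_ρ(p), I_ρ(p)) = I(G_ρ)`.
-/

open Finset

variable {ι : Type*}

section Neighbors

variable [Fintype ι] [DecidableEq ι]

noncomputable def neighbors (p : ι → ℝ) (i : ι) (r : ℝ) : Finset ι :=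
  univ.filter fun j => j ≠ i ∧ |p i - p j| ≤ r

theorem neighbors_mono (p : ι → ℝ) (i : ι) : Monotone (neighbors p i) :=
  fun _ _ hab _ hj => by
    simp only [neighbors, mem_filter] at hj ⊢
    exact ⟨hj.1, hj.2.1, hj.2.2.trans hab⟩

theorem max_card_neighbors (p : ι → ℝ) (i : ι) (a b : ℝ) :
    max #(neighbors p i a) #(neighbors p i b) = #(neighbors p i (max a b)) :=
  ((card_mono.comp (neighbors_mono p i)).map_max).symm

end Neighbors

section Adjacency

def LeftRightAdj [Preorder ι] (p ρl ρr : ι → ℝ) (u v : ι) : Prop :=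
  (u < v ∧ p v - p u ≤ ρr u) ∨ (v < u ∧ p u - p v ≤ ρl u)

theorem LeftRightAdj.abs_sub_le_max [Preorder ι] {p ρl ρr : ι → ℝ} (hp : Monotone p) {u v : ι}
    (h : LeftRightAdj p ρl ρr u v) : |p u - p v| ≤ max (ρl u) (ρr u) := by
  rcases h with ⟨huv, h⟩ | ⟨hvu, h⟩
  · rw [abs_sub_comm, abs_of_nonneg (sub_nonneg.2 (hp huv.le))]
    exact h.trans (le_max_right _ _)
  · rw [abs_of_nonneg (sub_nonneg.2 (hp hvu.le))]
    exact h.trans (le_max_left _ _)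

theorem leftRightAdj_of_abs_sub_le [LinearOrder ι] {p ρ : ι → ℝ} (hp : Monotone p) {u v : ι}
    (huv : u ≠ v) (h : |p u - p v| ≤ ρ u) : LeftRightAdj p ρ ρ u v := by
  rcases huv.lt_or_gt with huv | hvu
  · rw [abs_sub_comm, abs_of_nonneg (sub_nonneg.2 (hp huv.le))] at h
    exact Or.inl ⟨huv, h⟩
  · rw [abs_of_nonneg (sub_nonneg.2 (hp hvu.le))] at h
    exact Or.inr ⟨hvu, h⟩

theorem LeftRightAdj.reflTransGen_range_max [Preorder ι] {p ρl ρr : ι → ℝ} (hp : Monotone p)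
    {a b : ι} (h : Relation.ReflTransGen (LeftRightAdj p ρl ρr) a b) :
    Relation.ReflTransGen (fun u v => |p u - p v| ≤ max (ρl u) (ρr u)) a b :=
  Relation.ReflTransGen.mono (fun _ _ => LeftRightAdj.abs_sub_le_max hp) _ _ h

theorem reflTransGen_leftRightAdj_of_range [LinearOrder ι] {p ρ : ι → ℝ} (hp : Monotone p)
    {a b : ι} (h : Relation.ReflTransGen (fun u v => |p u - p v| ≤ ρ u) a b) :
    Relation.ReflTransGen (LeftRightAdj p ρ ρ) a b :=
  h.lift' id fun u v huv => by
    obtain rfl | hne := eq_or_ne u v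
    · exact .refl
    · exact .single (leftRightAdj_of_abs_sub_le hp hne huv)

end Adjacency

/-- for points on a line, the minimum of
`cost(ρˡ,ρʳ) = Σ_p max(I_{ρˡ}(p), I_{ρʳ}(p))` over valid left-right assignments equals the
minimum total interference `I(G_ρ)` over valid range assignments. -/
theorem min_leftRight_cost_eq_min_interference {n : ℕ} (p : Fin n → ℝ) (hp : StrictMono p) :
    sInf {c : ℕ | ∃ ρl ρr : Fin n → ℝ, (∀ i, 0 ≤ ρl i) ∧ (∀ i, 0 ≤ ρr i) ∧
        (∀ a b : Fin n, Relation.ReflTransGen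
          (fun u v : Fin n => (u < v ∧ p v - p u ≤ ρr u) ∨ (v < u ∧ p u - p v ≤ ρl u)) a b) ∧
        c = ∑ i : Fin n,
          max ((univ.filter (fun j => j ≠ i ∧ |p i - p j| ≤ ρl i)).card)
              ((univ.filter (fun j => j ≠ i ∧ |p i - p j| ≤ ρr i)).card)}
      = sInf {c : ℕ | ∃ ρ : Fin n → ℝ, (∀ i, 0 ≤ ρ i) ∧
          (∀ a b : Fin n, Relation.ReflTransGen
            (fun u v : Fin n => |p u - p v| ≤ ρ u) a b) ∧
          c = ∑ i : Fin n, (univ.filter (fun j => j ≠ i ∧ |p i - p j| ≤ ρ i)).card} := by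
  congr 1
  ext c
  constructor
  · rintro ⟨ρl, ρr, hl, _, hconn, rfl⟩
    exact ⟨fun i => max (ρl i) (ρr i), fun i => le_max_of_le_left (hl i),
      fun a b => LeftRightAdj.reflTransGen_range_max hp.monotone (hconn a b),
      sum_congr rfl fun i _ => max_card_neighbors p i (ρl i) (ρr i)⟩
  · rintro ⟨ρ, hρ, hconn, rfl⟩
    exact ⟨ρ, ρ, hρ, hρ, fun a b => reflTransGen_leftRightAdj_of_range hp.monotone (hconn a b),
      sum_congr rfl fun i _ => (max_self _).symm⟩
end
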